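/- arXiv:1702.08657 — 8 statements merged into one kernel-verified Lean document; each statement's English description precedes it below -/
import Mathlib

section
/- Binet formula for Horadam quaternions: for every natural number n, Gₙ = (A·α̲·αⁿ − B·β̲·βⁿ)/(α − β), where the products A·α̲ and B·β̲ are scalar multiplications of the real quaternions α̲ and β̲. -/
open Quaternion

/-- The Horadam sequence `w(a,b;p,q)`: `w₀ = a`, `w₁ = b`,
`wₙ = p·wₙ₋₁ + q·wₙ₋₂` for `n ≥ 2`. -/
def horadam (a b p q : ℝ) : ℕ → ℝ
  | 0 => a
  | 1 => b
  | n + 2 => p * horadam a b p q (n + 1) + q * horadam a b p q n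

/-- The `n`-th Horadam quaternion `Gₙ = wₙ + wₙ₊₁·i + wₙ₊₂·j + wₙ₊₃·k`. -/
def horadamQ (a b p q : ℝ) (n : ℕ) : ℍ[ℝ] :=
  ⟨horadam a b p q n, horadam a b p q (n + 1), horadam a b p q (n + 2), horadam a b p q (n + 3)⟩


variable {a b p q α β : ℝ}

/-- Applied with `s = ±√(p² + 4q)`, this gives both roots of `x² = p x + q`. -/
theorem sq_half_add_eq_of_sq_eq {s : ℝ} (hs : s ^ 2 = p ^ 2 + 4 * q) :
    ((p + s) / 2) ^ 2 = p * ((p + s) / 2) + q := by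
  linear_combination hs / 4

theorem horadam_mul_sub_eq (hα : α ^ 2 = p * α + q) (hβ : β ^ 2 = p * β + q) (n : ℕ) :
    horadam a b p q n * (α - β) = (b - a * β) * α ^ n - (b - a * α) * β ^ n := by
  induction n using Nat.twoStepInduction with
  | zero => simp only [horadam, pow_zero]; ring
  | one => simp only [horadam, pow_one]; ring
  | more n h₀ h₁ =>
    simp only [horadam]
    linear_combination p * h₁ + q * h₀ - (b - a * β) * α ^ n * hα + (b - a * α) * β ^ n * hβ

theorem horadam_eq_binet (hα : α ^ 2 = p * α + q) (hβ : β ^ 2 = p * β + q) (hne : α ≠ β)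
    (n : ℕ) :
    horadam a b p q n = ((b - a * β) * α ^ n - (b - a * α) * β ^ n) / (α - β) := by
  rw [eq_div_iff (sub_ne_zero.mpr hne), horadam_mul_sub_eq hα hβ]

theorem Quaternion.div_coe {R : Type*} [Field R] [LinearOrder R] [IsStrictOrderedRing R]
    (x : ℍ[R]) (r : R) : x / (r : ℍ[R]) = r⁻¹ • x := by
  rw [div_eq_mul_inv, ← coe_inv, mul_coe_eq_smul]

/-- Binet formula for Horadam quaternions:
`Gₙ = (A·α̲·αⁿ − B·β̲·βⁿ)/(α − β)`. -/
theorem horadamQ_binet (a b p q : ℝ) (hpq : p ^ 2 + 4 * q > 0)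
    (α β A B : ℝ)
    (hα : α = (p + Real.sqrt (p ^ 2 + 4 * q)) / 2)
    (hβ : β = (p - Real.sqrt (p ^ 2 + 4 * q)) / 2)
    (hA : A = b - a * β) (hB : B = b - a * α)
    (αq βq : ℍ[ℝ])
    (hαq : αq = ⟨1, α, α ^ 2, α ^ 3⟩) (hβq : βq = ⟨1, β, β ^ 2, β ^ 3⟩) :
    ∀ n : ℕ, horadamQ a b p q n =
      ((A * α ^ n) • αq - (B * β ^ n) • βq) / ((α - β : ℝ) : ℍ[ℝ]) := by
  intro n
  set s := Real.sqrt (p ^ 2 + 4 * q)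
  have hs : s ^ 2 = p ^ 2 + 4 * q := Real.sq_sqrt hpq.le
  have hα₂ : α ^ 2 = p * α + q := hα ▸ sq_half_add_eq_of_sq_eq hs
  have hβ₂ : β ^ 2 = p * β + q := by
    rw [hβ, sub_eq_add_neg]; exact sq_half_add_eq_of_sq_eq (by rw [neg_sq, hs])
  have hne : α ≠ β := by
    rw [hα, hβ]; linarith [Real.sqrt_pos.mpr hpq]
  have binet := horadam_eq_binet (a := a) (b := b) hα₂ hβ₂ hne
  subst hA hB
  rw [Quaternion.div_coe]
  -- `hαq`, `hβq` are used only after `ext`: the literals have type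
  -- `QuaternionAlgebra ℝ (-1) 0 (-1)`, which is not reducibly `ℍ[ℝ]`,
  -- so substituting them under `•` blocks the `smul` simp lemmas.
  ext <;> simp only [horadamQ, binet, Quaternion.re_smul, Quaternion.imI_smul,
    Quaternion.imJ_smul, Quaternion.imK_smul, Quaternion.re_sub, Quaternion.imI_sub,
    Quaternion.imJ_sub, Quaternion.imK_sub, smul_eq_mul] <;> rw [hαq, hβq] <;> ring
end

section
/- Binet formula for dual Horadam quaternions: for every natural number n, Ĝₙ = (A·α̲·αⁿ·(1 + α·ε) − B·β̲·βⁿ·(1 + β·ε))/(α − β), where the computation takes place in the algebra of dual quaternions (dual numbers over ℍ) and ε denotes the dual unit with ε² = 0. -/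
open Quaternion DualNumber TrivSqZeroExt

/-- The `n`-th dual Horadam quaternion `Ĝₙ = Gₙ + Gₙ₊₁·ε`, an element of the
dual numbers over `ℍ[ℝ]`, where `ε² = 0`. -/
noncomputable def dualHoradamQ (a b p q : ℝ) (n : ℕ) : DualNumber ℍ[ℝ] :=
  inl (horadamQ a b p q n) + inl (horadamQ a b p q (n + 1)) * ε


/-! Since `α` and `β` are the roots of `x² - p x - q`, both `n ↦ αⁿ` and `n ↦ βⁿ` satisfy the
Horadam recurrence, hence so does `n ↦ A αⁿ - B βⁿ`; it agrees with `(α - β) wₙ` at `n = 0, 1`.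
Reading this off coordinatewise gives `(α - β) Gₙ = A αⁿ α̲ - B βⁿ β̲`, and the dual part follows
from `inl x * (1 + c ε) = x + (c x) ε` applied to `Gₙ₊₁`, whose Binet coefficients are those of
`Gₙ` times `α` and `β`. -/

section DualNumber

variable {S R : Type*} [CommSemiring S] [Semiring R] [Algebra S R]

theorem DualNumber.fst_inl_mul_one_add_smul_eps (x : R) (c : S) :
    (inl x * (1 + c • ε) : R[ε]).fst = x := by
  simp

theorem DualNumber.snd_inl_mul_one_add_smul_eps (x : R) (c : S) :
    (inl x * (1 + c • ε) : R[ε]).snd = c • x := by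
  simp

end DualNumber

/-- The quaternion `x̲ = 1 + x i + x² j + x³ k`. -/
def powersQuaternion (x : ℝ) : ℍ[ℝ] :=
  ⟨1, x, x ^ 2, x ^ 3⟩

@[simp] theorem re_powersQuaternion (x : ℝ) : (powersQuaternion x).re = 1 := rfl
@[simp] theorem imI_powersQuaternion (x : ℝ) : (powersQuaternion x).imI = x := rfl
@[simp] theorem imJ_powersQuaternion (x : ℝ) : (powersQuaternion x).imJ = x ^ 2 := rfl
@[simp] theorem imK_powersQuaternion (x : ℝ) : (powersQuaternion x).imK = x ^ 3 := rfl

section Binet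

variable {a b p q α β : ℝ}

theorem pow_add_two_of_add_of_mul (hsum : α + β = p) (hprod : α * β = -q) (n : ℕ) :
    α ^ (n + 2) = p * α ^ (n + 1) + q * α ^ n := by
  rw [← hsum, ← neg_neg q, ← hprod]
  ring

theorem sub_mul_horadam (hsum : α + β = p) (hprod : α * β = -q) (n : ℕ) :
    (α - β) * horadam a b p q n = (b - a * β) * α ^ n - (b - a * α) * β ^ n := by
  induction n using Nat.twoStepInduction with
  | zero => simp only [horadam]; ring
  | one => simp only [horadam]; ring
  | more n ih₀ ih₁ =>
    rw [horadam, pow_add_two_of_add_of_mul hsum hprod,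
      pow_add_two_of_add_of_mul ((add_comm β α).trans hsum) ((mul_comm β α).trans hprod)]
    linear_combination p * ih₁ + q * ih₀

@[simp] theorem re_horadamQ (n : ℕ) : (horadamQ a b p q n).re = horadam a b p q n := rfl
@[simp] theorem imI_horadamQ (n : ℕ) : (horadamQ a b p q n).imI = horadam a b p q (n + 1) := rfl
@[simp] theorem imJ_horadamQ (n : ℕ) : (horadamQ a b p q n).imJ = horadam a b p q (n + 2) := rfl
@[simp] theorem imK_horadamQ (n : ℕ) : (horadamQ a b p q n).imK = horadam a b p q (n + 3) := rfl

theorem sub_smul_horadamQ (hsum : α + β = p) (hprod : α * β = -q) (n : ℕ) :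
    (α - β) • horadamQ a b p q n =
      ((b - a * β) * α ^ n) • powersQuaternion α - ((b - a * α) * β ^ n) • powersQuaternion β := by
  ext <;> simp only [Quaternion.re_smul, Quaternion.imI_smul, Quaternion.imJ_smul,
    Quaternion.imK_smul, Quaternion.re_sub, Quaternion.imI_sub, Quaternion.imJ_sub,
    Quaternion.imK_sub, re_horadamQ, imI_horadamQ, imJ_horadamQ, imK_horadamQ, re_powersQuaternion,
    imI_powersQuaternion, imJ_powersQuaternion, imK_powersQuaternion, smul_eq_mul,
    sub_mul_horadam hsum hprod] <;> ring

@[simp]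
theorem fst_dualHoradamQ (n : ℕ) : (dualHoradamQ a b p q n).fst = horadamQ a b p q n := by
  simp [dualHoradamQ]

@[simp]
theorem snd_dualHoradamQ (n : ℕ) : (dualHoradamQ a b p q n).snd = horadamQ a b p q (n + 1) := by
  simp [dualHoradamQ]

theorem sub_smul_dualHoradamQ (hsum : α + β = p) (hprod : α * β = -q) (n : ℕ) :
    (α - β) • dualHoradamQ a b p q n =
      ((b - a * β) * α ^ n) • (inl (powersQuaternion α) * (1 + α • ε)) -
        ((b - a * α) * β ^ n) • (inl (powersQuaternion β) * (1 + β • ε)) := by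
  refine TrivSqZeroExt.ext ?_ ?_
  · simp only [fst_smul, fst_sub, fst_dualHoradamQ, DualNumber.fst_inl_mul_one_add_smul_eps]
    exact sub_smul_horadamQ hsum hprod n
  · simp only [snd_smul, snd_sub, snd_dualHoradamQ, DualNumber.snd_inl_mul_one_add_smul_eps,
      smul_smul]
    simpa only [pow_succ, mul_assoc] using sub_smul_horadamQ hsum hprod (n + 1)

end Binet

/-- Binet formula for dual Horadam quaternions:
`Ĝₙ = (A·α̲·αⁿ·(1 + α·ε) − B·β̲·βⁿ·(1 + β·ε))/(α − β)`. -/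
theorem dualHoradamQ_binet (a b p q : ℝ) (hpq : p ^ 2 + 4 * q > 0)
    (α β A B : ℝ)
    (hα : α = (p + Real.sqrt (p ^ 2 + 4 * q)) / 2)
    (hβ : β = (p - Real.sqrt (p ^ 2 + 4 * q)) / 2)
    (hA : A = b - a * β) (hB : B = b - a * α)
    (αq βq : ℍ[ℝ])
    (hαq : αq = ⟨1, α, α ^ 2, α ^ 3⟩) (hβq : βq = ⟨1, β, β ^ 2, β ^ 3⟩) :
    ∀ n : ℕ, dualHoradamQ a b p q n =
      (α - β)⁻¹ • ((A * α ^ n) • (inl αq * (1 + α • ε)) -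
        (B * β ^ n) • (inl βq * (1 + β • ε))) := by
  intro n
  have hsqrt : Real.sqrt (p ^ 2 + 4 * q) ^ 2 = p ^ 2 + 4 * q := Real.sq_sqrt hpq.le
  have hsum : α + β = p := by rw [hα, hβ]; ring
  have hprod : α * β = -q := by rw [hα, hβ]; linear_combination -hsqrt / 4
  have hdiff : α - β = Real.sqrt (p ^ 2 + 4 * q) := by rw [hα, hβ]; ring
  have hne : α - β ≠ 0 := hdiff ▸ (Real.sqrt_pos.mpr hpq).ne'
  subst hA hB hαq hβq
  rw [eq_inv_smul_iff₀ hne]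
  exact sub_smul_dualHoradamQ hsum hprod n
end

section
/- Generating function for dual Horadam quaternions: in the ring of formal power series over the dual quaternions, (1 − pX − qX²) · (Σₙ Ĝₙ Xⁿ) = Ĝ₀ + (Ĝ₁ − p·Ĝ₀)·X; equivalently, the generating function of the sequence (Ĝₙ) is (Ĝ₀ + (Ĝ₁ − p·Ĝ₀)t)/(1 − pt − qt²). -/
/-! The coefficient of `Xⁿ⁺²` on the left is `Ĝₙ₊₂ − p·Ĝₙ₊₁ − q·Ĝₙ`, which vanishes because
the recurrence of `w` passes to every component of `Gₙ` and then of `Ĝₙ`; the coefficients of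
`1` and `X` are read off directly. -/

open Quaternion DualNumber TrivSqZeroExt

theorem PowerSeries.one_sub_C_mul_X_sub_C_mul_X_sq_mul_mk {A : Type*} [Ring A] {p q : A}
    {f : ℕ → A} (hf : ∀ n, f (n + 2) = p * f (n + 1) + q * f n) :
    (1 - C p * X - C q * X ^ 2) * mk f = C (f 0) + C (f 1 - p * f 0) * X := by
  ext n
  rcases n with _ | _ | n
  · simp
  · simp [sub_mul, mul_assoc, coeff_X_pow_mul']
  · simp [sub_mul, mul_assoc, coeff_X_pow_mul', hf]

theorem horadamQ_add_two (a b p q : ℝ) (n : ℕ) :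
    horadamQ a b p q (n + 2) = p • horadamQ a b p q (n + 1) + q • horadamQ a b p q n := by
  ext <;> rfl

theorem dualHoradamQ_add_two (a b p q : ℝ) (n : ℕ) :
    dualHoradamQ a b p q (n + 2) =
      p • dualHoradamQ a b p q (n + 1) + q • dualHoradamQ a b p q n := by
  refine TrivSqZeroExt.ext ?_ ?_ <;>
    simp [dualHoradamQ, show n + 2 + 1 = n + 1 + 2 from rfl, horadamQ_add_two]

open PowerSeries in
/-- Generating function for dual Horadam quaternions: in the power series ring over the
dual quaternions, `(1 − pX − qX²)·(Σₙ Ĝₙ Xⁿ) = Ĝ₀ + (Ĝ₁ − p·Ĝ₀)·X`. -/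
theorem dualHoradamQ_generating_function (a b p q : ℝ) :
    (1 - C (R := DualNumber ℍ[ℝ]) (algebraMap ℝ _ p) * X -
        C (R := DualNumber ℍ[ℝ]) (algebraMap ℝ _ q) * X ^ 2) *
      PowerSeries.mk (fun n => dualHoradamQ a b p q n) =
    C (R := DualNumber ℍ[ℝ]) (dualHoradamQ a b p q 0) +
      C (R := DualNumber ℍ[ℝ]) (dualHoradamQ a b p q 1 - p • dualHoradamQ a b p q 0) * X := by
  rw [one_sub_C_mul_X_sub_C_mul_X_sq_mul_mk fun n => by
    simpa only [← Algebra.smul_def] using dualHoradamQ_add_two a b p q n, ← Algebra.smul_def]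
end

section
/- Sum formula for Horadam quaternions: if α ≠ 1 and β ≠ 1, then for every natural number n, Σ_{i=0}^{n} Gᵢ = (1/(α−β))·( B·β̲·βⁿ⁺¹/(1−β) − A·α̲·αⁿ⁺¹/(1−α) ) + K, where K = (A·α̲·(1−β) − B·β̲·(1−α)) / ((α−β)(1−α)(1−β)). -/
/-!
Since `α` and `β` are the roots of `x² = p x + q`, both `n ↦ αⁿ` and `n ↦ βⁿ` satisfy the Horadam
recurrence, which gives the Binet formula `(α - β) wₙ = A αⁿ - B βⁿ`. Reading it off in each of
the four components gives `(α - β) Gₙ = A αⁿ α̲ - B βⁿ β̲`, so the sum of the `Gᵢ` is a combination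
of two geometric sums, which `α ≠ 1` and `β ≠ 1` allow us to evaluate.
-/

open Quaternion

/-- The paper's `x̲`. -/
def powerQuat (x : ℝ) : ℍ[ℝ] := ⟨1, x, x ^ 2, x ^ 3⟩

theorem half_add_sq_eq {p q s : ℝ} (hs : s ^ 2 = p ^ 2 + 4 * q) :
    ((p + s) / 2) ^ 2 = p * ((p + s) / 2) + q := by
  linear_combination hs / 4

section Binet

variable {a b p q α β : ℝ} (hα : α ^ 2 = p * α + q) (hβ : β ^ 2 = p * β + q)
include hα hβ

theorem horadam_binet (n : ℕ) :
    (α - β) * horadam a b p q n = (b - a * β) * α ^ n - (b - a * α) * β ^ n := by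
  induction n using Nat.twoStepInduction with
  | zero => simp only [horadam]; ring
  | one => simp only [horadam]; ring
  | more n ih₀ ih₁ =>
    rw [horadam]
    linear_combination p * ih₁ + q * ih₀ - (b - a * β) * α ^ n * hα + (b - a * α) * β ^ n * hβ

theorem horadamQ_binet_s8 (n : ℕ) :
    (α - β) • horadamQ a b p q n =
      ((b - a * β) * α ^ n) • powerQuat α - ((b - a * α) * β ^ n) • powerQuat β := by
  ext <;>
    simp only [re_smul, imI_smul, imJ_smul, imK_smul, re_sub, imI_sub, imJ_sub, imK_sub,
      smul_eq_mul] <;>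
    simp only [horadamQ, powerQuat, horadam_binet hα hβ] <;>
    ring

theorem smul_sum_range_horadamQ (n : ℕ) :
    (α - β) • ∑ i ∈ Finset.range n, horadamQ a b p q i =
      ((b - a * β) * ∑ i ∈ Finset.range n, α ^ i) • powerQuat α
        - ((b - a * α) * ∑ i ∈ Finset.range n, β ^ i) • powerQuat β := by
  simp only [Finset.smul_sum, horadamQ_binet_s8 hα hβ, Finset.sum_sub_distrib, Finset.mul_sum,
    Finset.sum_smul]

end Binet

/-- Sum formula for Horadam quaternions. -/
theorem horadamQ_sum (a b p q : ℝ) (hpq : p ^ 2 + 4 * q > 0)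
    (α β A B : ℝ)
    (hα : α = (p + Real.sqrt (p ^ 2 + 4 * q)) / 2)
    (hβ : β = (p - Real.sqrt (p ^ 2 + 4 * q)) / 2)
    (hA : A = b - a * β) (hB : B = b - a * α)
    (hα1 : α ≠ 1) (hβ1 : β ≠ 1)
    (αq βq K : ℍ[ℝ])
    (hαq : αq = ⟨1, α, α ^ 2, α ^ 3⟩) (hβq : βq = ⟨1, β, β ^ 2, β ^ 3⟩)
    (hK : K = ((α - β) * (1 - α) * (1 - β))⁻¹ • ((A * (1 - β)) • αq - (B * (1 - α)) • βq)) :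
    ∀ n : ℕ, ∑ i ∈ Finset.range (n + 1), horadamQ a b p q i =
      (α - β)⁻¹ • ((B * β ^ (n + 1) / (1 - β)) • βq - (A * α ^ (n + 1) / (1 - α)) • αq) + K := by
  intro n
  have hs : Real.sqrt (p ^ 2 + 4 * q) ^ 2 = p ^ 2 + 4 * q := Real.sq_sqrt hpq.le
  have hαβ : α - β ≠ 0 := by
    rw [hα, hβ]
    linarith [Real.sqrt_pos.mpr hpq]
  have hα_root : α ^ 2 = p * α + q := hα ▸ half_add_sq_eq hs
  have hβ_root : β ^ 2 = p * β + q := by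
    rw [hβ, sub_eq_add_neg]
    exact half_add_sq_eq (by rwa [neg_sq])
  rw [← smul_right_inj hαβ, smul_sum_range_horadamQ hα_root hβ_root, geom_sum_eq hα1,
    geom_sum_eq hβ1, hK, show αq = powerQuat α from hαq, show βq = powerQuat β from hβq, ← hA, ← hB]
  match_scalars <;> field_simp <;> ring
end

section
/- Closed form for the sum of eight consecutive squared Horadam numbers (the real part of the norm of the n-th Horadam octonion): for every natural number n, Σ_{i=0}^{7} w_{n+i}² = ( A²·α^{2n}·(1 + α² + α⁴ + ⋯ + α¹⁴) + B²·β^{2n}·(1 + β² + β⁴ + ⋯ + β¹⁴) − 2AB·(−q)ⁿ·(1 + (−q) + (−q)² + ⋯ + (−q)⁷) ) / (α − β)². -/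
/-- Closed form for the sum of eight consecutive squared Horadam numbers. -/
theorem horadam_sum_eight_squares (a b p q : ℝ) (hpq : p ^ 2 + 4 * q > 0)
    (α β A B : ℝ)
    (hα : α = (p + Real.sqrt (p ^ 2 + 4 * q)) / 2)
    (hβ : β = (p - Real.sqrt (p ^ 2 + 4 * q)) / 2)
    (hA : A = b - a * β) (hB : B = b - a * α) :
    ∀ n : ℕ, ∑ i ∈ Finset.range 8, (horadam a b p q (n + i)) ^ 2 =
      (A ^ 2 * α ^ (2 * n) * ∑ j ∈ Finset.range 8, α ^ (2 * j) +
        B ^ 2 * β ^ (2 * n) * ∑ j ∈ Finset.range 8, β ^ (2 * j) -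
        2 * A * B * (-q) ^ n * ∑ j ∈ Finset.range 8, (-q) ^ j) / (α - β) ^ 2 := by
  have hs : Real.sqrt (p ^ 2 + 4 * q) ^ 2 = p ^ 2 + 4 * q :=
    Real.sq_sqrt hpq.le
  have hspos : Real.sqrt (p ^ 2 + 4 * q) > 0 := Real.sqrt_pos.mpr hpq
  have hαβ : α * β = -q := by rw [hα, hβ]; nlinarith [hs]
  have hsum : α + β = p := by rw [hα, hβ]; ring
  have hne : α - β ≠ 0 := by
    rw [hα, hβ]; intro h; nlinarith [hspos]
  have hα2 : α ^ 2 = p * α + q := by nlinarith [hαβ, hsum]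
  have hβ2 : β ^ 2 = p * β + q := by nlinarith [hαβ, hsum]
  have binet : ∀ m : ℕ, (α - β) * horadam a b p q m = A * α ^ m - B * β ^ m := by
    have key : ∀ m : ℕ, (α - β) * horadam a b p q m = A * α ^ m - B * β ^ m ∧
        (α - β) * horadam a b p q (m + 1) = A * α ^ (m + 1) - B * β ^ (m + 1) := by
      intro m
      induction m with
      | zero =>
        constructor
        · simp [horadam, hA, hB]; ring
        · simp [horadam, hA, hB]; ring
      | succ k ih =>
        refine ⟨ih.2, ?_⟩
        show (α - β) * horadam a b p q (k + 2) = _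
        have : horadam a b p q (k + 2) =
            p * horadam a b p q (k + 1) + q * horadam a b p q k := rfl
        rw [this]
        have h1 := ih.1
        have h2 := ih.2
        have e1 : α ^ (k + 2) = (p * α + q) * α ^ k := by
          rw [← hα2]; ring
        have e2 : β ^ (k + 2) = (p * β + q) * β ^ k := by
          rw [← hβ2]; ring
        rw [e1, e2]
        linear_combination p * h2 + q * h1
    exact fun m => (key m).1
  have hw : ∀ m : ℕ, horadam a b p q m = (A * α ^ m - B * β ^ m) / (α - β) := by
    intro m
    field_simp
    linarith [binet m]
  intro n
  have hq : (-q : ℝ) = α * β := hαβ.symm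
  simp only [Finset.sum_range_succ, Finset.sum_range_zero, hw, hq]
  field_simp
  ring
end

section
/- Norm of a dual Horadam quaternion: for every natural number n, the product Ĝₙ · conj(Ĝₙ) (where conj is quaternion conjugation applied to both components of the dual quaternion) equals e₁ + e₂·ε, where e₁ = Σ_{i=0}^{3} w_{n+i}² = ( A²·α^{2n}·(1 + α² + α⁴ + α⁶) + B²·β^{2n}·(1 + β² + β⁴ + β⁶) − 2AB·(−q)ⁿ·(1 + (−q) + (−q)² + (−q)³) ) / (α − β)², and e₂ = 2·Σ_{i=0}^{3} w_{n+i}·w_{n+1+i}. -/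
/-!
In `(x + y ε)(x̄ + ȳ ε) = x x̄ + (x ȳ + y x̄) ε` both components are real: `x x̄ = ‖x‖²`, and
`x ȳ + y x̄ = x ȳ + conj (x ȳ)` is twice the inner product of `x` and `y`. The closed form is
Binet's formula `(α - β) wₘ = A αᵐ - B βᵐ` squared, with `α β = -q`.
-/

open Quaternion DualNumber TrivSqZeroExt

/-- The conjugate of a dual quaternion: quaternion conjugation applied to both
components, `conj(x + y·ε) = conj(x) + conj(y)·ε`. -/
noncomputable def dualConj (x : DualNumber ℍ[ℝ]) : DualNumber ℍ[ℝ] :=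
  inl (star x.fst) + inl (star x.snd) * ε

theorem DualNumber.inl_add_inl_mul_eps_mul {R : Type*} [Semiring R] (x y x' y' : R) :
    (inl x + inl y * ε) * (inl x' + inl y' * ε : DualNumber R) =
      inl (x * x') + inl (x * y' + y * x') * ε := by
  ext <;> simp

theorem dualConj_inl_add_inl_mul_eps (x y : ℍ[ℝ]) :
    dualConj (inl x + inl y * ε) = inl (star x) + inl (star y) * ε := by
  simp [dualConj]

theorem Quaternion.mul_star_add_mul_star (x y : ℍ[ℝ]) :
    x * star y + y * star x =
      ((2 * (x.re * y.re + x.imI * y.imI + x.imJ * y.imJ + x.imK * y.imK) : ℝ) : ℍ[ℝ]) := by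
  have hstar : star (x * star y) = y * star x := by rw [star_mul, star_star]
  rw [← hstar, self_add_star', re_mul]
  congr 1
  simp only [re_star, imI_star, imJ_star, imK_star]
  ring

section Binet

variable {a b p q α β : ℝ}

theorem horadam_mul_sub (hsum : α + β = p) (hmul : α * β = -q) (n : ℕ) :
    horadam a b p q n * (α - β) = (b - a * β) * α ^ n - (b - a * α) * β ^ n := by
  induction n using Nat.twoStepInduction with
  | zero => simp only [horadam]; ring
  | one => simp only [horadam]; ring
  | more n ih₀ ih₁ =>
    rw [horadam, add_mul, mul_assoc, mul_assoc, ih₀, ih₁]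
    linear_combination (-((b - a * β) * α ^ (n + 1) - (b - a * α) * β ^ (n + 1))) * hsum
      + ((b - a * β) * α ^ n - (b - a * α) * β ^ n) * hmul

theorem sum_range_horadam_sq_mul (hsum : α + β = p) (hmul : α * β = -q) (n k : ℕ) :
    (∑ i ∈ Finset.range k, horadam a b p q (n + i) ^ 2) * (α - β) ^ 2 =
      (b - a * β) ^ 2 * α ^ (2 * n) * ∑ j ∈ Finset.range k, α ^ (2 * j) +
        (b - a * α) ^ 2 * β ^ (2 * n) * ∑ j ∈ Finset.range k, β ^ (2 * j) -
        2 * (b - a * β) * (b - a * α) * (-q) ^ n * ∑ j ∈ Finset.range k, (-q) ^ j := by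
  induction k with
  | zero => simp
  | succ k ih =>
    simp only [Finset.sum_range_succ]
    rw [add_mul, ih, ← mul_pow, horadam_mul_sub hsum hmul, ← hmul]
    ring

end Binet

theorem horadamQ_mul_star (a b p q : ℝ) (n : ℕ) :
    horadamQ a b p q n * star (horadamQ a b p q n) =
      ((∑ i ∈ Finset.range 4, horadam a b p q (n + i) ^ 2 : ℝ) : ℍ[ℝ]) := by
  rw [self_mul_star, normSq_def']
  simp [horadamQ, Finset.sum_range_succ]

theorem horadamQ_mul_star_succ_add (a b p q : ℝ) (n : ℕ) :
    horadamQ a b p q n * star (horadamQ a b p q (n + 1)) +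
        horadamQ a b p q (n + 1) * star (horadamQ a b p q n) =
      ((2 * ∑ i ∈ Finset.range 4, horadam a b p q (n + i) * horadam a b p q (n + 1 + i) : ℝ) :
        ℍ[ℝ]) := by
  rw [Quaternion.mul_star_add_mul_star]
  simp [horadamQ, Finset.sum_range_succ, add_assoc]

theorem dualHoradamQ_mul_dualConj (a b p q : ℝ) (n : ℕ) :
    dualHoradamQ a b p q n * dualConj (dualHoradamQ a b p q n) =
      inl ((∑ i ∈ Finset.range 4, horadam a b p q (n + i) ^ 2 : ℝ) : ℍ[ℝ]) +
        inl ((2 * ∑ i ∈ Finset.range 4,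
          horadam a b p q (n + i) * horadam a b p q (n + 1 + i) : ℝ) : ℍ[ℝ]) * ε := by
  rw [dualHoradamQ, dualConj_inl_add_inl_mul_eps, DualNumber.inl_add_inl_mul_eps_mul,
    horadamQ_mul_star, horadamQ_mul_star_succ_add]

/-- Norm of a dual Horadam quaternion: `Ĝₙ·conj(Ĝₙ) = e₁ + e₂·ε` with
`e₁ = Σ_{i=0}^{3} w_{n+i}²` (which has the stated Binet closed form) and
`e₂ = 2·Σ_{i=0}^{3} w_{n+i}·w_{n+1+i}`. -/
theorem dualHoradamQ_norm (a b p q : ℝ) (hpq : p ^ 2 + 4 * q > 0)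
    (α β A B : ℝ)
    (hα : α = (p + Real.sqrt (p ^ 2 + 4 * q)) / 2)
    (hβ : β = (p - Real.sqrt (p ^ 2 + 4 * q)) / 2)
    (hA : A = b - a * β) (hB : B = b - a * α) :
    ∀ n : ℕ,
      (dualHoradamQ a b p q n * dualConj (dualHoradamQ a b p q n) =
          inl ((((∑ i ∈ Finset.range 4, (horadam a b p q (n + i)) ^ 2) : ℝ) : ℍ[ℝ])) +
            inl (((2 * ∑ i ∈ Finset.range 4,
                horadam a b p q (n + i) * horadam a b p q (n + 1 + i) : ℝ) : ℍ[ℝ])) * ε) ∧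
      (∑ i ∈ Finset.range 4, (horadam a b p q (n + i)) ^ 2 =
          (A ^ 2 * α ^ (2 * n) * ∑ j ∈ Finset.range 4, α ^ (2 * j) +
            B ^ 2 * β ^ (2 * n) * ∑ j ∈ Finset.range 4, β ^ (2 * j) -
            2 * A * B * (-q) ^ n * ∑ j ∈ Finset.range 4, (-q) ^ j) / (α - β) ^ 2) := by
  intro n
  have hD : Real.sqrt (p ^ 2 + 4 * q) ^ 2 = p ^ 2 + 4 * q := Real.sq_sqrt hpq.le
  have hsum : α + β = p := by rw [hα, hβ]; ring
  have hmul : α * β = -q := by rw [hα, hβ]; linear_combination (-1 / 4 : ℝ) * hD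
  have hne : α - β ≠ 0 := by
    rw [show α - β = Real.sqrt (p ^ 2 + 4 * q) by rw [hα, hβ]; ring]
    exact (Real.sqrt_pos.mpr hpq).ne'
  subst hA hB
  refine ⟨dualHoradamQ_mul_dualConj a b p q n, ?_⟩
  rw [eq_div_iff (pow_ne_zero 2 hne)]
  exact sum_range_horadam_sq_mul hsum hmul n 4
end

section
/- The real part of the norm of the n-th dual Fibonacci octonion: for every natural number n, Σ_{i=0}^{7} F_{n+i}² = 21·F_{2n+7}, where Fₖ denotes the k-th Fibonacci number. -/
/-- The real part of the norm of the `n`-th dual Fibonacci octonion: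
`Σ_{i=0}^{7} F_{n+i}² = 21·F_{2n+7}`. -/
theorem fib_sum_eight_squares (n : ℕ) :
    ∑ i ∈ Finset.range 8, (Nat.fib (n + i)) ^ 2 = 21 * Nat.fib (2 * n + 7) := by
  have key : 2 * n + 7 = n + (n + 6) + 1 := by ring
  have hadd := Nat.fib_add n (n + 6)
  set a := Nat.fib n with ha
  set b := Nat.fib (n + 1) with hb
  have e2 : Nat.fib (n + 2) = a + b := by rw [Nat.fib_add_two]
  have e3 : Nat.fib (n + 3) = a + 2 * b := by
    have h := Nat.fib_add_two (n := n + 1)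
    rw [show n+1+2 = n+3 from rfl, show n+1+1 = n+2 from rfl] at h
    omega
  have e4 : Nat.fib (n + 4) = 2 * a + 3 * b := by
    have h := Nat.fib_add_two (n := n + 2)
    rw [show n+2+2 = n+4 from rfl, show n+2+1 = n+3 from rfl] at h
    omega
  have e5 : Nat.fib (n + 5) = 3 * a + 5 * b := by
    have h := Nat.fib_add_two (n := n + 3)
    rw [show n+3+2 = n+5 from rfl, show n+3+1 = n+4 from rfl] at h
    omega
  have e6 : Nat.fib (n + 6) = 5 * a + 8 * b := by
    have h := Nat.fib_add_two (n := n + 4)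
    rw [show n+4+2 = n+6 from rfl, show n+4+1 = n+5 from rfl] at h
    omega
  have e7 : Nat.fib (n + 7) = 8 * a + 13 * b := by
    have h := Nat.fib_add_two (n := n + 5)
    rw [show n+5+2 = n+7 from rfl, show n+5+1 = n+6 from rfl] at h
    omega
  rw [show n+6+1 = n+7 from rfl] at hadd
  rw [key, hadd, e6, e7]
  simp [Finset.sum_range_succ, e2, e3, e4, e5, e6, e7]
  ring
end

section
/- The dual part of the norm of the n-th dual Fibonacci octonion: for every natural number n, 2·Σ_{i=0}^{7} F_{n+i}·F_{n+1+i} = 42·F_{2n+8}, where Fₖ denotes the k-th Fibonacci number. -/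
/-- The dual part of the norm of the `n`-th dual Fibonacci octonion:
`2·Σ_{i=0}^{7} F_{n+i}·F_{n+1+i} = 42·F_{2n+8}`. -/
theorem fib_sum_eight_products (n : ℕ) :
    2 * ∑ i ∈ Finset.range 8, Nat.fib (n + i) * Nat.fib (n + 1 + i) =
      42 * Nat.fib (2 * n + 8) := by
  have h : 2 * n + 8 = (n + 3) + (n + 4) + 1 := by ring
  rw [h, Nat.fib_add]
  simp only [Finset.sum_range_succ, Finset.sum_range_zero,
    show ∀ k, n + 1 + k = n + (k+1) from fun k => by ring]
  simp only [show ∀ k, n + (k+2) = (n+k) + 2 from fun k => by ring, Nat.fib_add_two]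
  ring_nf
end
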